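/- Every metric space (X, d) with asdim(X, d) ≤ n is coarsely equivalent to a metric space (Y, D) satisfying property (N2)_n: for every x, y_1, …, y_{n+2} ∈ Y there exist i, j ∈ {1, …, n+2} with i ≠ j such that D(y_i, y_j) ≤ D(x, y_i). -/

import Mathlib

/-- The distance between two subsets of a metric space:
`d(A, B) = inf {d(a, b) : a ∈ A, b ∈ B}`. -/
noncomputable def setDist {X : Type*} [MetricSpace X] (A B : Set X) : ℝ :=
  sInf {r : ℝ | ∃ a ∈ A, ∃ b ∈ B, dist a b = r}

/-- A family `𝒰` of subsets is `r`-disjoint if any two distinct members `U, V`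
satisfy `d(U, V) > r`. -/
def RDisjoint {X : Type*} [MetricSpace X] (r : ℝ) (𝒰 : Set (Set X)) : Prop :=
  ∀ U ∈ 𝒰, ∀ V ∈ 𝒰, U ≠ V → r < setDist U V

/-- A family of subsets covers `X`. -/
def IsCover {X : Type*} (𝒰 : Set (Set X)) : Prop :=
  ∀ x : X, ∃ U ∈ 𝒰, x ∈ U

/-- A family is uniformly bounded if the diameters of its members have a common bound. -/
def UnifBounded {X : Type*} [MetricSpace X] (𝒰 : Set (Set X)) : Prop :=
  ∃ M : ℝ, ∀ U ∈ 𝒰, ∀ x ∈ U, ∀ y ∈ U, dist x y ≤ M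

/-- `asdim(X, d) ≤ n`: for every `r > 0` there is a uniformly bounded covering of `X`
splitting into `n + 1` families, each of which is `r`-disjoint. -/
def AsdimLE (n : ℕ) (X : Type*) [MetricSpace X] : Prop :=
  ∀ r : ℝ, 0 < r → ∃ 𝒰 : Fin (n + 1) → Set (Set X),
    IsCover (⋃ i, 𝒰 i) ∧ UnifBounded (⋃ i, 𝒰 i) ∧ ∀ i, RDisjoint r (𝒰 i)

/-- `f` is a coarse map with respect to the distance functions `dX`, `dY`:
for every `δ > 0` there is `ε > 0` such that `dX a b ≤ δ` implies `dY (f a) (f b) ≤ ε`. -/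
def CoarseWith {X Y : Type*} (dX : X → X → ℝ) (dY : Y → Y → ℝ) (f : X → Y) : Prop :=
  ∀ δ : ℝ, 0 < δ → ∃ ε : ℝ, 0 < ε ∧ ∀ a b : X, dX a b ≤ δ → dY (f a) (f b) ≤ ε

/-- Property `(N2)_n` for a distance function `D`: for every `x, y₁, …, y_{n+2}` there
are `i ≠ j` with `D(yᵢ, yⱼ) ≤ D(x, yᵢ)`. -/
def N2Prop {Y : Type*} (n : ℕ) (D : Y → Y → ℝ) : Prop :=
  ∀ (x : Y) (y : Fin (n + 2) → Y), ∃ i j : Fin (n + 2), i ≠ j ∧ D (y i) (y j) ≤ D x (y i)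

universe u

/-!
Applying `asdim X ≤ n` at ever larger scales produces a sequence of families of subsets of `X`,
coloured by `n + 1` colours, in which every colour class is pairwise disjoint and uniformly
bounded, every level refines the previous one colourwise, and the Lebesgue number of each level
exceeds twice the bound of the previous one. A new level is built from a cover by `n + 1`
families that are `2 (B + L)`-disjoint: each of its members is thickened by `L` and absorbs the
sets of the previous level (bounded by `B`) of the same colour that it meets.

Let `κ(u, v)` be the first level at which `u` and `v` lie in a common set and put
`D(u, v) = κ(u, v) + 1` for `u ≠ v`. Chaining through a common point raises `κ` by at most one,
so `D` is a metric, and it is coarsely equivalent to `d` since the bounds and Lebesgue numbers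
are finite at each level. For `(N2)_n`, `x` shares a set with each `yᵢ` at level `κ(x, yᵢ)`;
two of these `n + 2` sets have the same colour, and at the higher of their two levels both
contain `x`, hence coincide, which gives `D(yᵢ, yⱼ) ≤ D(x, yᵢ)`.
-/

open Set Metric

section Families

variable {X : Type*} [MetricSpace X]

def DiamLE (B : ℝ) (𝒰 : Set (Set X)) : Prop :=
  ∀ U ∈ 𝒰, ∀ x ∈ U, ∀ y ∈ U, dist x y ≤ B

theorem setDist_le_dist {A B : Set X} {a b : X} (ha : a ∈ A) (hb : b ∈ B) :
    setDist A B ≤ dist a b :=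
  csInf_le ⟨0, by rintro _ ⟨_, _, _, _, rfl⟩; exact dist_nonneg⟩ ⟨a, ha, b, hb, rfl⟩

theorem RDisjoint.mono {r r' : ℝ} {𝒰 : Set (Set X)} (h : RDisjoint r 𝒰) (hr : r' ≤ r) :
    RDisjoint r' 𝒰 :=
  fun U hU V hV hUV => hr.trans_lt (h U hU V hV hUV)

theorem RDisjoint.eq_of_dist_le {r : ℝ} {𝒰 : Set (Set X)} (h : RDisjoint r 𝒰)
    {U V : Set X} (hU : U ∈ 𝒰) (hV : V ∈ 𝒰) {x y : X} (hx : x ∈ U) (hy : y ∈ V)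
    (hxy : dist x y ≤ r) : U = V := by
  by_contra hUV
  linarith [h U hU V hV hUV, setDist_le_dist hx hy]

theorem AsdimLE.exists_cover {n : ℕ} (h : AsdimLE n X) (r : ℝ) :
    ∃ (𝒰 : Fin (n + 1) → Set (Set X)) (M : ℝ), 0 ≤ M ∧ (∀ x, ∃ c, ∃ U ∈ 𝒰 c, x ∈ U) ∧
      (∀ c, DiamLE M (𝒰 c)) ∧ ∀ c, RDisjoint r (𝒰 c) := by
  obtain ⟨𝒰, hcover, ⟨M, hM⟩, hdisj⟩ := h (max r 1) (lt_max_of_lt_right one_pos)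
  refine ⟨𝒰, max M 0, le_max_right _ _, fun x => ?_, fun c U hU x hx y hy => ?_,
    fun c => (hdisj c).mono (le_max_left _ _)⟩
  · obtain ⟨U, hU, hx⟩ := hcover x
    obtain ⟨c, hc⟩ := mem_iUnion.1 hU
    exact ⟨c, U, hc, hx⟩
  · exact (hM U (mem_iUnion.2 ⟨c, hU⟩) x hx y hy).trans (le_max_left _ _)

def closedNbhd (L : ℝ) (V : Set X) : Set X :=
  ⋃ v ∈ V, closedBall v L

theorem mem_closedNbhd {L : ℝ} {V : Set X} {x : X} :
    x ∈ closedNbhd L V ↔ ∃ v ∈ V, dist x v ≤ L := by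
  simp [closedNbhd]

def absorb (P : Set (Set X)) (L : ℝ) (V : Set X) : Set X :=
  closedNbhd L V ∪ ⋃₀ {W ∈ P | (W ∩ closedNbhd L V).Nonempty}

section Merge

variable {P : Set (Set X)} {B L : ℝ} {V W : Set X}

theorem exists_dist_le_of_mem_absorb (hP : DiamLE B P) (hB : 0 ≤ B) {p : X}
    (hp : p ∈ absorb P L V) : ∃ v ∈ V, dist p v ≤ B + L := by
  obtain ⟨s, hs, hps⟩ : ∃ s ∈ closedNbhd L V, dist p s ≤ B := by
    rcases hp with hp | ⟨W, ⟨hW, s, hsW, hs⟩, hpW⟩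
    · exact ⟨p, hp, by simpa using hB⟩
    · exact ⟨s, hs, hP W hW p hpW s hsW⟩
  obtain ⟨v, hv, hsv⟩ := mem_closedNbhd.1 hs
  exact ⟨v, hv, (dist_triangle p s v).trans (add_le_add hps hsv)⟩

theorem disjoint_absorb (hP : P.PairwiseDisjoint id) (hW : W ∈ P)
    (hWV : Disjoint W (closedNbhd L V)) : Disjoint W (absorb P L V) := by
  refine disjoint_union_right.2 ⟨hWV, disjoint_sUnion_right.2 ?_⟩
  rintro W' ⟨hW', p, hpW', hpV⟩
  by_contra hWW'
  obtain rfl : W = W' := hP.elim hW hW' hWW'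
  exact disjoint_left.1 hWV hpW' hpV

def merge (P 𝒰 : Set (Set X)) (L : ℝ) : Set (Set X) :=
  absorb P L '' 𝒰 ∪ {W ∈ P | ∀ V ∈ 𝒰, Disjoint W (closedNbhd L V)}

variable {𝒰 : Set (Set X)} {M : ℝ}

theorem pairwiseDisjoint_merge (hP : P.PairwiseDisjoint id) (hPB : DiamLE B P) (hB : 0 ≤ B)
    (h𝒰 : RDisjoint (2 * (B + L)) 𝒰) : (merge P 𝒰 L).PairwiseDisjoint id := by
  rw [pairwiseDisjoint_iff]
  rintro _ (⟨V₁, hV₁, rfl⟩ | ⟨hW₁, hW₁𝒰⟩) _ (⟨V₂, hV₂, rfl⟩ | ⟨hW₂, hW₂𝒰⟩) ⟨p, hp₁, hp₂⟩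
  · obtain ⟨v₁, hv₁, hpv₁⟩ := exists_dist_le_of_mem_absorb hPB hB hp₁
    obtain ⟨v₂, hv₂, hpv₂⟩ := exists_dist_le_of_mem_absorb hPB hB hp₂
    rw [h𝒰.eq_of_dist_le hV₁ hV₂ hv₁ hv₂ (by linarith [dist_triangle_left v₁ v₂ p])]
  · exact (disjoint_left.1 (disjoint_absorb hP hW₂ (hW₂𝒰 V₁ hV₁)) hp₂ hp₁).elim
  · exact (disjoint_left.1 (disjoint_absorb hP hW₁ (hW₁𝒰 V₂ hV₂)) hp₁ hp₂).elim
  · exact hP.elim_set hW₁ hW₂ p hp₁ hp₂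

theorem diamLE_merge (hPB : DiamLE B P) (hB : 0 ≤ B) (h𝒰 : DiamLE M 𝒰) (hM : 0 ≤ M)
    (hL : 0 ≤ L) : DiamLE (M + 2 * (B + L)) (merge P 𝒰 L) := by
  rintro _ (⟨V, hV, rfl⟩ | ⟨hW, -⟩) p hp q hq
  · obtain ⟨v, hv, hpv⟩ := exists_dist_le_of_mem_absorb hPB hB hp
    obtain ⟨w, hw, hqw⟩ := exists_dist_le_of_mem_absorb hPB hB hq
    linarith [dist_triangle4 p v w q, dist_comm w q, h𝒰 V hV v hv w hw]
  · linarith [hPB _ hW p hp q hq]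

theorem exists_superset_mem_merge (hW : W ∈ P) : ∃ W' ∈ merge P 𝒰 L, W ⊆ W' := by
  by_cases h : ∃ V ∈ 𝒰, ¬Disjoint W (closedNbhd L V)
  · obtain ⟨V, hV, hWV⟩ := h
    exact ⟨absorb P L V, Or.inl ⟨V, hV, rfl⟩,
      fun p hp => Or.inr ⟨W, ⟨hW, not_disjoint_iff_nonempty_inter.1 hWV⟩, hp⟩⟩
  · push Not at h
    exact ⟨W, Or.inr ⟨hW, h⟩, subset_rfl⟩

theorem closedNbhd_subset_mem_merge (hV : V ∈ 𝒰) :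
    ∃ W ∈ merge P 𝒰 L, closedNbhd L V ⊆ W :=
  ⟨absorb P L V, Or.inl ⟨V, hV, rfl⟩, subset_union_left⟩

end Merge

end Families

structure ColouredFamily (n : ℕ) (X : Type*) [MetricSpace X] where
  fam : Fin (n + 1) → Set (Set X)
  bound : ℝ
  bound_nonneg : 0 ≤ bound
  pairwiseDisjoint : ∀ c, (fam c).PairwiseDisjoint id
  diamLE : ∀ c, DiamLE bound (fam c)

namespace ColouredFamily

variable {n : ℕ} {X : Type*} [MetricSpace X] (P Q : ColouredFamily n X)

def Linked (c : Fin (n + 1)) (u v : X) : Prop :=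
  ∃ U ∈ P.fam c, u ∈ U ∧ v ∈ U

def Refines : Prop :=
  ∀ c, ∀ U ∈ P.fam c, ∃ V ∈ Q.fam c, U ⊆ V

def HasLebesgueNumber (L : ℝ) : Prop :=
  ∀ u v : X, dist u v ≤ L → ∃ c, P.Linked c u v

def empty : ColouredFamily n X where
  fam _ := ∅
  bound := 0
  bound_nonneg := le_rfl
  pairwiseDisjoint _ := pairwiseDisjoint_empty
  diamLE _ _ hU := hU.elim

variable {P Q} {c : Fin (n + 1)} {u v w : X}

theorem Linked.symm (h : P.Linked c u v) : P.Linked c v u :=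
  let ⟨U, hU, hu, hv⟩ := h
  ⟨U, hU, hv, hu⟩

theorem Linked.trans (h₁ : P.Linked c u v) (h₂ : P.Linked c v w) : P.Linked c u w := by
  obtain ⟨U, hU, hu, hv⟩ := h₁
  obtain ⟨V, hV, hv', hw⟩ := h₂
  obtain rfl := (P.pairwiseDisjoint c).elim_set hU hV v hv hv'
  exact ⟨U, hU, hu, hw⟩

theorem Linked.dist_le (h : P.Linked c u v) : dist u v ≤ P.bound :=
  let ⟨U, hU, hu, hv⟩ := h
  P.diamLE c U hU u hu v hv

theorem Refines.linked (hPQ : P.Refines Q) (h : P.Linked c u v) : Q.Linked c u v :=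
  let ⟨U, hU, hu, hv⟩ := h
  let ⟨V, hV, hUV⟩ := hPQ c U hU
  ⟨V, hV, hUV hu, hUV hv⟩

theorem HasLebesgueNumber.mono {L L' : ℝ} (h : P.HasLebesgueNumber L) (hL : L' ≤ L) :
    P.HasLebesgueNumber L' :=
  fun u v huv => h u v (huv.trans hL)

end ColouredFamily

structure NestedSeq (n : ℕ) (X : Type*) [MetricSpace X] where
  level : ℕ → ColouredFamily n X
  refines : ∀ k, (level k).Refines (level (k + 1))
  hasLebesgueNumber_succ : ∀ k, (level (k + 1)).HasLebesgueNumber (2 * (level k).bound)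
  exists_hasLebesgueNumber : ∀ δ, ∃ k, (level k).HasLebesgueNumber δ

namespace NestedSeq

variable {n : ℕ} {X : Type*} [MetricSpace X] (S : NestedSeq n X)

theorem linked_mono {k m : ℕ} (hkm : k ≤ m) {c : Fin (n + 1)} {u v : X}
    (h : (S.level k).Linked c u v) : (S.level m).Linked c u v := by
  induction m, hkm using Nat.le_induction with
  | base => exact h
  | succ m _ ih => exact (S.refines m).linked ih

noncomputable def linkLevel (u v : X) : ℕ :=
  sInf {k | ∃ c, (S.level k).Linked c u v}

theorem exists_linked_linkLevel (u v : X) : ∃ c, (S.level (S.linkLevel u v)).Linked c u v :=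
  Nat.sInf_mem <|
    let ⟨k, hk⟩ := S.exists_hasLebesgueNumber (dist u v)
    ⟨k, hk u v le_rfl⟩

theorem linkLevel_le {k : ℕ} {c : Fin (n + 1)} {u v : X} (h : (S.level k).Linked c u v) :
    S.linkLevel u v ≤ k :=
  Nat.sInf_le ⟨c, h⟩

theorem linkLevel_comm (u v : X) : S.linkLevel u v = S.linkLevel v u :=
  have key (u v : X) : S.linkLevel u v ≤ S.linkLevel v u :=
    let ⟨_, h⟩ := S.exists_linked_linkLevel v u
    S.linkLevel_le h.symm
  le_antisymm (key u v) (key v u)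

/-- Points linked at level at most `m` are `bound m` apart, so pairs chained through a common
point are linked at level `m + 1`. -/
theorem linkLevel_le_max_succ (u v w : X) :
    S.linkLevel u w ≤ max (S.linkLevel u v) (S.linkLevel v w) + 1 := by
  set m := max (S.linkLevel u v) (S.linkLevel v w)
  obtain ⟨_, huv⟩ := S.exists_linked_linkLevel u v
  obtain ⟨_, hvw⟩ := S.exists_linked_linkLevel v w
  have hdist : dist u w ≤ 2 * (S.level m).bound := by
    linarith [dist_triangle u v w, (S.linked_mono (le_max_left _ _ : _ ≤ m) huv).dist_le,
      (S.linked_mono (le_max_right _ _ : _ ≤ m) hvw).dist_le]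
  obtain ⟨_, huw⟩ := S.hasLebesgueNumber_succ m u w hdist
  exact S.linkLevel_le huw

open Classical in
noncomputable def linkDist (u v : X) : ℝ :=
  if u = v then 0 else S.linkLevel u v + 1

theorem linkDist_self (u : X) : S.linkDist u u = 0 :=
  if_pos rfl

theorem linkDist_of_ne {u v : X} (h : u ≠ v) : S.linkDist u v = S.linkLevel u v + 1 :=
  if_neg h

theorem linkDist_nonneg (u v : X) : 0 ≤ S.linkDist u v := by
  unfold linkDist
  split_ifs <;> positivity

theorem linkDist_le (u v : X) : S.linkDist u v ≤ S.linkLevel u v + 1 := by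
  unfold linkDist
  split_ifs <;> linarith [(S.linkLevel u v).cast_nonneg (α := ℝ)]

theorem linkDist_comm (u v : X) : S.linkDist u v = S.linkDist v u := by
  rcases eq_or_ne u v with rfl | h
  · rfl
  · rw [S.linkDist_of_ne h, S.linkDist_of_ne h.symm, linkLevel_comm]

theorem linkDist_triangle (u v w : X) : S.linkDist u w ≤ S.linkDist u v + S.linkDist v w := by
  rcases eq_or_ne u w with rfl | huw
  · rw [linkDist_self]
    exact add_nonneg (S.linkDist_nonneg _ _) (S.linkDist_nonneg _ _)
  rcases eq_or_ne u v with rfl | huv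
  · rw [linkDist_self, zero_add]
  rcases eq_or_ne v w with rfl | hvw
  · rw [linkDist_self, add_zero]
  rw [S.linkDist_of_ne huw, S.linkDist_of_ne huv, S.linkDist_of_ne hvw]
  have := S.linkLevel_le_max_succ u v w
  exact_mod_cast (by omega : S.linkLevel u w + 1 ≤ S.linkLevel u v + 1 + (S.linkLevel v w + 1))

theorem eq_of_linkDist_eq_zero {u v : X} (h : S.linkDist u v = 0) : u = v := by
  by_contra huv
  rw [S.linkDist_of_ne huv] at h
  linarith [(S.linkLevel u v).cast_nonneg (α := ℝ)]

noncomputable abbrev linkMetric : MetricSpace X where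
  dist := S.linkDist
  dist_self := S.linkDist_self
  dist_comm := S.linkDist_comm
  dist_triangle := S.linkDist_triangle
  eq_of_dist_eq_zero := S.eq_of_linkDist_eq_zero

theorem coarseWith_dist_linkDist : CoarseWith dist S.linkDist id := by
  intro δ _
  obtain ⟨k, hk⟩ := S.exists_hasLebesgueNumber δ
  refine ⟨k + 1, by positivity, fun a b hab => ?_⟩
  obtain ⟨_, hab⟩ := hk a b hab
  calc S.linkDist a b ≤ S.linkLevel a b + 1 := S.linkDist_le a b
    _ ≤ k + 1 := by gcongr; exact_mod_cast S.linkLevel_le hab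

theorem coarseWith_linkDist_dist : CoarseWith S.linkDist dist id := by
  intro δ _
  have hB := (S.level ⌈δ⌉₊).bound_nonneg
  refine ⟨(S.level ⌈δ⌉₊).bound + 1, by linarith, fun a b hab => ?_⟩
  rcases eq_or_ne a b with rfl | hne
  · simp only [id, dist_self]
    linarith
  obtain ⟨_, h⟩ := S.exists_linked_linkLevel a b
  have hk : S.linkLevel a b ≤ ⌈δ⌉₊ := by
    rw [S.linkDist_of_ne hne] at hab
    exact_mod_cast (by linarith : (S.linkLevel a b : ℝ) ≤ δ).trans (Nat.le_ceil δ)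
  exact ((S.linked_mono hk h).dist_le).trans (by linarith)

theorem exists_linkLevel_le (x : X) (y : Fin (n + 2) → X) :
    ∃ i j, i ≠ j ∧ S.linkLevel (y i) (y j) ≤ S.linkLevel x (y i) := by
  choose c hc using fun i => S.exists_linked_linkLevel x (y i)
  obtain ⟨i, j, hij, hcij⟩ := Fintype.exists_ne_map_eq_of_card_lt c (by simp)
  wlog hle : S.linkLevel x (y j) ≤ S.linkLevel x (y i) generalizing i j
  · exact this j i hij.symm hcij.symm (le_of_not_ge hle)
  have hj := S.linked_mono hle (hc j)
  rw [← hcij] at hj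
  exact ⟨i, j, hij, S.linkLevel_le ((hc i).symm.trans hj)⟩

theorem n2Prop_linkDist : N2Prop n S.linkDist := by
  intro x y
  by_cases hx : ∃ i, y i = x
  · obtain ⟨i, hi⟩ := hx
    obtain ⟨j, hji⟩ := exists_ne i
    exact ⟨j, i, hji, by rw [hi, S.linkDist_comm]⟩
  push Not at hx
  obtain ⟨i, j, hij, hle⟩ := S.exists_linkLevel_le x y
  refine ⟨i, j, hij, (S.linkDist_le _ _).trans ?_⟩
  rw [S.linkDist_of_ne (hx i).symm]
  gcongr

end NestedSeq

namespace AsdimLE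

variable {n : ℕ} {X : Type*} [MetricSpace X]

theorem exists_refines_hasLebesgueNumber (h : AsdimLE n X) (P : ColouredFamily n X) {L : ℝ}
    (hL : 0 ≤ L) : ∃ Q : ColouredFamily n X, P.Refines Q ∧ Q.HasLebesgueNumber L := by
  obtain ⟨𝒰, M, hM, hcover, h𝒰M, h𝒰⟩ := h.exists_cover (2 * (P.bound + L))
  refine ⟨⟨fun c => merge (P.fam c) (𝒰 c) L, M + 2 * (P.bound + L),
      by linarith [P.bound_nonneg],
      fun c => pairwiseDisjoint_merge (P.pairwiseDisjoint c) (P.diamLE c) P.bound_nonneg (h𝒰 c),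
      fun c => diamLE_merge (P.diamLE c) P.bound_nonneg (h𝒰M c) hM hL⟩,
    fun c W hW => exists_superset_mem_merge hW, fun u v huv => ?_⟩
  obtain ⟨c, V, hV, hu⟩ := hcover u
  obtain ⟨W, hW, hVW⟩ := closedNbhd_subset_mem_merge (P := P.fam c) (L := L) hV
  exact ⟨c, W, hW, hVW (mem_closedNbhd.2 ⟨u, hu, (dist_self u).trans_le hL⟩),
    hVW (mem_closedNbhd.2 ⟨u, hu, (dist_comm v u).trans_le huv⟩)⟩

/-- The Lebesgue number `max (2 * bound k) k` of level `k + 1` exceeds twice the previous bound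
and tends to infinity with `k`. -/
noncomputable def nestedLevel (h : AsdimLE n X) : ℕ → ColouredFamily n X
  | 0 => .empty
  | k + 1 => (h.exists_refines_hasLebesgueNumber (h.nestedLevel k)
      (L := max (2 * (h.nestedLevel k).bound) k)
      ((Nat.cast_nonneg k).trans (le_max_right _ _))).choose

theorem nestedLevel_succ_spec (h : AsdimLE n X) (k : ℕ) :
    (h.nestedLevel k).Refines (h.nestedLevel (k + 1)) ∧
      (h.nestedLevel (k + 1)).HasLebesgueNumber (max (2 * (h.nestedLevel k).bound) k) :=
  (h.exists_refines_hasLebesgueNumber (h.nestedLevel k)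
    ((Nat.cast_nonneg k).trans (le_max_right _ _))).choose_spec

noncomputable def nestedSeq (h : AsdimLE n X) : NestedSeq n X where
  level := h.nestedLevel
  refines k := (h.nestedLevel_succ_spec k).1
  hasLebesgueNumber_succ k := (h.nestedLevel_succ_spec k).2.mono (le_max_left _ _)
  exists_hasLebesgueNumber δ := ⟨⌈δ⌉₊ + 1,
    (h.nestedLevel_succ_spec _).2.mono ((Nat.le_ceil δ).trans (le_max_right _ _))⟩

end AsdimLE

/-- Every metric space `(X, d)` with `asdim X ≤ n` is coarsely equivalent to a metric
space `(Y, D)` satisfying property `(N2)_n`. -/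
theorem coarse_equiv_to_N2 {X : Type u} [MetricSpace X] (n : ℕ) (h : AsdimLE n X) :
    ∃ (Y : Type u) (_ : MetricSpace Y) (f : X → Y) (g : Y → X),
      CoarseWith dist dist f ∧ CoarseWith dist dist g ∧
      (∃ C : ℝ, 0 < C ∧ (∀ x : X, dist x (g (f x)) ≤ C) ∧ ∀ y : Y, dist y (f (g y)) ≤ C) ∧
      N2Prop n (fun a b : Y => dist a b) := by
  let S := h.nestedSeq
  refine ⟨X, S.linkMetric, id, id, S.coarseWith_dist_linkDist, S.coarseWith_linkDist_dist,
    ⟨1, one_pos, fun x => ?_, fun y => ?_⟩, S.n2Prop_linkDist⟩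
  · exact (dist_self x).trans_le zero_le_one
  · exact (S.linkDist_self y).trans_le zero_le_one
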